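/- Let p be an odd prime, ζ_p a primitive p-th root of unity, k = ℚ_p(ζ_p), and U^(n) = 1 + m_k^n. Then ζ_p ∈ U^(1) \ U^(2), the cyclic group ⟨ζ_p⟩ intersects U^(2) trivially, and U^(1) is the internal direct product ⟨ζ_p⟩ × U^(2). -/

import Mathlib

open IsUltrametricDist Polynomial Finset

section PrincipalUnitsAux

variable {p : ℕ} [hp : Fact p.Prime]

private lemma aux_pow_le_pow_iff_of_lt_one {t : ℝ} (h0 : 0 < t) (h1 : t < 1) {m n : ℕ} :
    t ^ m ≤ t ^ n ↔ n ≤ m := by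
  rw [← not_lt, ← not_lt]
  exact not_congr (pow_lt_pow_iff_right_of_lt_one₀ h0 h1)

private lemma aux_t_rpow {t : ℝ} (ht0 : 0 ≤ t) (htp : t ^ (p - 1) = (p : ℝ)⁻¹) :
    t = (p : ℝ) ^ (-(1 / ((p : ℝ) - 1))) := by
  have hq1 : (1 : ℝ) < (p : ℝ) := by exact_mod_cast hp.out.one_lt
  have hq0 : (0 : ℝ) < (p : ℝ) := by linarith
  have hcast : ((p - 1 : ℕ) : ℝ) = (p : ℝ) - 1 := by
    have := hp.out.one_lt
    push_cast [Nat.cast_sub (by omega : 1 ≤ p)]; ring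
  have hs : ((p : ℝ) ^ (-(1 / ((p : ℝ) - 1)))) ^ (p - 1) = (p : ℝ)⁻¹ := by
    rw [← Real.rpow_natCast ((p : ℝ) ^ (-(1 / ((p : ℝ) - 1)))) (p - 1),
      ← Real.rpow_mul hq0.le, hcast]
    have hne : (p : ℝ) - 1 ≠ 0 := by linarith
    rw [show -(1 / ((p : ℝ) - 1)) * ((p : ℝ) - 1) = -1 by field_simp]
    rw [Real.rpow_neg_one]
  exact (pow_left_inj₀ ht0 (Real.rpow_nonneg hq0.le _) (by have := hp.out.one_lt; omega)).mp
    (htp.trans hs.symm)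

private lemma aux_t_pos {t : ℝ} (ht0 : 0 ≤ t) (htp : t ^ (p - 1) = (p : ℝ)⁻¹) : 0 < t := by
  rcases ht0.lt_or_eq with h | h
  · exact h
  · exfalso
    rw [← h, zero_pow (by have := hp.out.one_lt; omega : p - 1 ≠ 0)] at htp
    have hq0 : (0 : ℝ) < (p : ℝ) := by exact_mod_cast hp.out.pos
    have : (0:ℝ) < (p:ℝ)⁻¹ := by positivity
    rw [← htp] at this; exact lt_irrefl 0 this

private lemma aux_t_lt_one {t : ℝ} (ht0 : 0 ≤ t) (htp : t ^ (p - 1) = (p : ℝ)⁻¹) : t < 1 := by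
  by_contra h
  push_neg at h
  have h1 : (1:ℝ) ≤ t ^ (p - 1) := one_le_pow₀ h
  rw [htp] at h1
  have hq1 : (1 : ℝ) < (p : ℝ) := by exact_mod_cast hp.out.one_lt
  have : (p:ℝ)⁻¹ < 1 := by
    rw [inv_lt_one_iff₀]; right; exact hq1
  linarith

private lemma aux_padic_norm_lt_one {c : ℚ_[p]} (h : ‖c‖ < 1) : ‖c‖ ≤ (p : ℝ)⁻¹ := by
  rcases eq_or_ne c 0 with rfl | hc
  · rw [norm_zero]; positivity
  · rw [Padic.norm_eq_zpow_neg_valuation hc] at h ⊢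
    have hq1 : (1 : ℝ) < (p : ℝ) := by exact_mod_cast hp.out.one_lt
    have h1 : -c.valuation < 0 := by
      by_contra hcon
      push_neg at hcon
      exact absurd (one_le_zpow₀ hq1.le hcon) (not_le.mpr h)
    calc (p:ℝ) ^ (-c.valuation) ≤ (p:ℝ) ^ (-1 : ℤ) := by
          apply zpow_le_zpow_right₀ hq1.le (by omega)
      _ = (p:ℝ)⁻¹ := by simp

private lemma aux_padic_norm_gt_one {c : ℚ_[p]} (h : ¬ ‖c‖ ≤ 1) : (p : ℝ) ≤ ‖c‖ := by
  have hc : c ≠ 0 := by rintro rfl; simp at h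
  rw [Padic.norm_eq_zpow_neg_valuation hc] at h ⊢
  have hq1 : (1 : ℝ) < (p : ℝ) := by exact_mod_cast hp.out.one_lt
  have h1 : 0 < -c.valuation := by
    by_contra hcon
    push_neg at hcon
    have : (p:ℝ) ^ (-c.valuation) ≤ (p:ℝ) ^ (0:ℤ) := zpow_le_zpow_right₀ hq1.le hcon
    simp only [zpow_zero] at this
    exact h this
  calc (p:ℝ) = (p:ℝ) ^ (1:ℤ) := by simp
    _ ≤ (p:ℝ) ^ (-c.valuation) := zpow_le_zpow_right₀ hq1.le (by omega)

private lemma aux_dominant {K : Type*} [NormedField K] (hu : IsUltrametricDist K)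
    {ι : Type*} [DecidableEq ι] {s : Finset ι} {f : ι → K} {i₀ : ι} (h₀ : i₀ ∈ s)
    (hlt : ∀ j ∈ s, j ≠ i₀ → ‖f j‖ < ‖f i₀‖) :
    ‖∑ j ∈ s, f j‖ = ‖f i₀‖ := by
  rw [← Finset.add_sum_erase s f h₀]
  rcases (s.erase i₀).eq_empty_or_nonempty with h | h
  · rw [h, Finset.sum_empty, add_zero]
  · have hrest : ‖∑ j ∈ s.erase i₀, f j‖ < ‖f i₀‖ := by
      refine lt_of_le_of_lt (h.norm_sum_le_sup'_norm _) ?_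
      exact (Finset.sup'_lt_iff h).mpr
        (fun j hj => hlt j (Finset.mem_of_mem_erase hj) (Finset.ne_of_mem_erase hj))
    rw [norm_add_eq_max_of_norm_ne_norm hrest.ne', max_eq_left hrest.le]

open Classical in
private lemma aux_each_le {K : Type*} [NormedField K] (hu : IsUltrametricDist K)
    {ι : Type*} [DecidableEq ι] {s : Finset ι} {f : ι → K}
    (hdist : ∀ j ∈ s, ∀ j' ∈ s, f j ≠ 0 → f j' ≠ 0 → ‖f j‖ = ‖f j'‖ → j = j') :
    ∀ j ∈ s, ‖f j‖ ≤ ‖∑ i ∈ s, f i‖ := by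
  intro j hj
  rcases eq_or_ne (f j) 0 with hfj | hfj
  · rw [hfj, norm_zero]; exact norm_nonneg _
  set S : Finset ι := s.filter (fun i => f i ≠ 0) with hSdef
  have hjS : j ∈ S := by rw [hSdef, mem_filter]; exact ⟨hj, hfj⟩
  have hSsum : ∑ i ∈ S, f i = ∑ i ∈ s, f i := Finset.sum_filter_of_ne (fun i _ h => h)
  obtain ⟨i₀, hi₀S, hmax⟩ := S.exists_max_image (fun i => ‖f i‖) ⟨j, hjS⟩
  have hSmem : ∀ k ∈ S, f k ≠ 0 := fun k hk => (mem_filter.mp hk).2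
  have hdom : ‖∑ i ∈ S, f i‖ = ‖f i₀‖ := by
    apply aux_dominant hu hi₀S
    intro k hk hki₀
    rcases lt_or_eq_of_le (hmax k hk) with h | h
    · exact h
    · exact absurd (hdist k (mem_filter.mp hk).1 i₀ (mem_filter.mp hi₀S).1
        (hSmem k hk) (hSmem i₀ hi₀S) h) hki₀
  rw [← hSsum, hdom]
  exact hmax j hjS

private lemma aux_distinct {t : ℝ} (h0 : 0 < t) (htp : t ^ (p - 1) = (p : ℝ)⁻¹)
    {c c' : ℚ_[p]} (hc : c ≠ 0) (hc' : c' ≠ 0) {j j' : ℕ}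
    (hj'lt : j' < p - 1) (hjj' : j < j') : ‖c‖ * t ^ j ≠ ‖c'‖ * t ^ j' := by
  intro heq
  have hq1 : (1 : ℝ) < (p : ℝ) := by exact_mod_cast hp.out.one_lt
  set d : ℕ := j' - j with hddef
  have hd0 : 0 < d := by omega
  have hdlt : d < p - 1 := by omega
  have htj : t ^ j' = t ^ j * t ^ d := by rw [← pow_add]; congr 1; omega
  rw [htj] at heq
  have hcancel : ‖c‖ = ‖c'‖ * t ^ d :=
    mul_right_cancel₀ (pow_ne_zero j h0.ne') (heq.trans (by ring))
  have hpow : ‖c‖ ^ (p-1) = ‖c'‖ ^ (p-1) * ((p:ℝ)⁻¹) ^ d := by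
    rw [hcancel, mul_pow, ← pow_mul, Nat.mul_comm, pow_mul, htp]
  rw [Padic.norm_eq_zpow_neg_valuation hc, Padic.norm_eq_zpow_neg_valuation hc'] at hpow
  rw [← zpow_natCast ((p:ℝ) ^ (-c.valuation)), ← zpow_natCast ((p:ℝ) ^ (-c'.valuation)),
    ← zpow_mul, ← zpow_mul] at hpow
  have hinv : ((p:ℝ)⁻¹) ^ d = (p:ℝ) ^ (-(d:ℤ)) := by
    rw [inv_pow, ← zpow_natCast, ← zpow_neg]
  rw [hinv, ← zpow_add₀ (by positivity : (p:ℝ) ≠ 0)] at hpow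
  have hexp := zpow_right_injective₀ (by positivity : (0:ℝ) < (p:ℝ)) (ne_of_gt hq1) hpow
  have hc1 : ((p - 1 : ℕ) : ℤ) = (p:ℤ) - 1 := by
    have := hp.out.one_lt; omega
  rw [hc1] at hexp
  set P : ℤ := (p:ℤ) - 1 with hPdef
  have hP0 : 0 < P := by have := hp.out.one_lt; omega
  set m : ℤ := c.valuation - c'.valuation with hmdef
  have hd : (d:ℤ) = m * P := by rw [hmdef]; linarith [hexp]
  have hdpos : (0:ℤ) < (d:ℤ) := by exact_mod_cast hd0
  have hdP : (d:ℤ) < P := by rw [hPdef]; exact_mod_cast (by omega : (d:ℤ) < (p:ℤ) - 1)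
  rcases le_or_gt m 0 with hm | hm
  · have : m * P ≤ 0 := mul_nonpos_of_nonpos_of_nonneg hm hP0.le
    linarith
  · have h1m : (1:ℤ) ≤ m := hm
    have : P ≤ m * P := le_mul_of_one_le_left hP0.le h1m
    linarith

private lemma aux_coeff_small {t : ℝ} (h0 : 0 < t) (h1 : t < 1)
    (htp : t ^ (p - 1) = (p : ℝ)⁻¹)
    {c : ℚ_[p]} {j : ℕ} (hj : j < p - 1) (hle : ‖c‖ * t ^ j ≤ t) : ‖c‖ ≤ 1 := by
  by_contra hcon
  have hple : (p:ℝ) ≤ ‖c‖ := aux_padic_norm_gt_one hcon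
  have h2 : (p:ℝ) * t ^ j ≤ t :=
    le_trans (mul_le_mul_of_nonneg_right hple (pow_nonneg h0.le j)) hle
  have e1 : t ^ p = t ^ (p-1) * t := by rw [← pow_succ]; congr 1; have := hp.out.one_lt; omega
  have e2 : (p:ℝ) * t ^ (p-1) = 1 := by
    rw [htp]; have : (p:ℝ) ≠ 0 := by exact_mod_cast hp.out.ne_zero
    field_simp
  have h3 : t ^ j ≤ t ^ p := by
    calc t ^ j = ((p:ℝ) * t^(p-1)) * t^j := by rw [e2, one_mul]
      _ = t^(p-1) * ((p:ℝ) * t^j) := by ring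
      _ ≤ t^(p-1) * t := mul_le_mul_of_nonneg_left h2 (pow_nonneg h0.le _)
      _ = t ^ p := e1.symm
  have := (aux_pow_le_pow_iff_of_lt_one h0 h1).mp h3
  omega

variable {K : Type*} [NormedField K] [Algebra ℚ_[p] K]

private lemma aux_ultra (hnorm : ∀ x : ℚ_[p], ‖algebraMap ℚ_[p] K x‖ = ‖x‖) :
    IsUltrametricDist K := by
  apply isUltrametricDist_of_forall_norm_natCast_le_one
  intro n
  rw [show ((n:K)) = algebraMap ℚ_[p] K n by push_cast; ring, hnorm]
  exact_mod_cast Padic.norm_int_le_one (n : ℤ)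

private lemma aux_norm_zeta {ζ : K} (hζ : IsPrimitiveRoot ζ p) : ‖ζ‖ = 1 := by
  have h : ‖ζ‖ ^ p = 1 ^ p := by rw [← norm_pow, hζ.pow_eq_one, one_pow, norm_one]
  exact (pow_left_inj₀ (norm_nonneg ζ) zero_le_one hp.out.ne_zero).mp h

private lemma aux_pow_sub_one_le {K : Type*} [NormedField K] (hu : IsUltrametricDist K)
    {ζ : K} (h1 : ‖ζ‖ = 1) (i : ℕ) : ‖ζ ^ i - 1‖ ≤ ‖ζ - 1‖ := by
  rw [← geom_sum_mul ζ i, norm_mul]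
  calc ‖∑ k ∈ range i, ζ ^ k‖ * ‖ζ - 1‖ ≤ 1 * ‖ζ - 1‖ := by
        apply mul_le_mul_of_nonneg_right _ (norm_nonneg _)
        exact norm_sum_le_of_forall_le_of_nonneg zero_le_one
          (fun j _ => by rw [norm_pow, h1, one_pow])
    _ = ‖ζ - 1‖ := one_mul _

private lemma aux_norm_pow_sub_one (hu : IsUltrametricDist K) {ζ : K}
    (hζ : IsPrimitiveRoot ζ p) {i : ℕ} (hi : ¬ p ∣ i) : ‖ζ ^ i - 1‖ = ‖ζ - 1‖ := by
  have h1 := aux_norm_zeta hζ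
  refine le_antisymm (aux_pow_sub_one_le hu h1 i) ?_
  have hcop : Nat.Coprime i p := (hp.out.coprime_iff_not_dvd.mpr hi).symm
  set j := ((i : ZMod p)⁻¹).val with hj
  have hcast : ((i * j : ℕ) : ZMod p) = ((1 : ℕ) : ZMod p) := by
    push_cast
    rw [hj, ZMod.natCast_val, ZMod.cast_id]
    exact ZMod.coe_mul_inv_eq_one i hcop
  have hmod : (i * j) % p = 1 % p := (ZMod.natCast_eq_natCast_iff' _ _ _).mp hcast
  rw [Nat.mod_eq_of_lt hp.out.one_lt] at hmod
  have hij : i * j = p * (i * j / p) + 1 := by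
    conv_lhs => rw [← Nat.div_add_mod (i * j) p, hmod]
  have hzeta : (ζ ^ i) ^ j = ζ := by
    rw [← pow_mul, hij, pow_add, pow_mul, hζ.pow_eq_one, one_pow, one_mul, pow_one]
  calc ‖ζ - 1‖ = ‖(ζ ^ i) ^ j - 1‖ := by rw [hzeta]
    _ ≤ ‖ζ ^ i - 1‖ := aux_pow_sub_one_le hu (by rw [norm_pow, h1, one_pow]) j

private lemma aux_t_pow (hnorm : ∀ x : ℚ_[p], ‖algebraMap ℚ_[p] K x‖ = ‖x‖)
    (hu : IsUltrametricDist K) {ζ : K} (hζ : IsPrimitiveRoot ζ p) :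
    ‖ζ - 1‖ ^ (p - 1) = (p : ℝ)⁻¹ := by
  obtain ⟨n, hn⟩ : ∃ n, p = n + 1 := ⟨p - 1, (Nat.succ_pred_eq_of_pos hp.out.pos).symm⟩
  have hprod := (hn ▸ hζ : IsPrimitiveRoot ζ (n + 1)).prod_one_sub_pow_eq_order
  have hnorms := congrArg norm hprod
  rw [norm_prod] at hnorms
  have heach : ∀ k ∈ range n, ‖1 - ζ ^ (k + 1)‖ = ‖ζ - 1‖ := by
    intro k hk
    rw [norm_sub_rev]
    apply aux_norm_pow_sub_one hu hζ
    rw [mem_range] at hk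
    intro hdvd
    have := Nat.le_of_dvd (k.succ_pos) hdvd
    omega
  rw [Finset.prod_congr rfl heach, Finset.prod_const, card_range] at hnorms
  have hrhs : ‖((n : K) + 1)‖ = (p : ℝ)⁻¹ := by
    have h2 : ((n : K) + 1) = algebraMap ℚ_[p] K ((n : ℚ_[p]) + 1) := by push_cast; ring
    have h3 : ((n : ℚ_[p]) + 1) = (p : ℚ_[p]) := by
      exact_mod_cast (congrArg (Nat.cast (R := ℚ_[p])) hn).symm
    rw [h2, hnorm, h3, Padic.norm_p]
  rw [hrhs] at hnorms
  have hn' : p - 1 = n := by omega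
  rw [hn', hnorms]

private lemma aux_pow_expand {K : Type*} [NormedField K] (hu : IsUltrametricDist K) {ζ : K}
    (h1 : ‖ζ‖ = 1) (i : ℕ) : ‖ζ ^ i - 1 - (i : K) * (ζ - 1)‖ ≤ ‖ζ - 1‖ ^ 2 := by
  have hrw : ζ ^ i - 1 - (i : K) * (ζ - 1) = (∑ k ∈ range i, (ζ ^ k - 1)) * (ζ - 1) := by
    rw [Finset.sum_sub_distrib, sum_const, card_range, nsmul_eq_mul, mul_one, sub_mul,
      geom_sum_mul]
  rw [hrw, norm_mul, sq]
  apply mul_le_mul_of_nonneg_right _ (norm_nonneg _)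
  exact norm_sum_le_of_forall_le_of_nonneg (norm_nonneg _)
    (fun k _ => aux_pow_sub_one_le hu h1 k)

private lemma aux_digit (hnorm : ∀ x : ℚ_[p], ‖algebraMap ℚ_[p] K x‖ = ‖x‖)
    (hu : IsUltrametricDist K) {ζ : K} (hζ : IsPrimitiveRoot ζ p) (hodd : Odd p)
    (hgen : Algebra.adjoin ℚ_[p] ({ζ} : Set K) = ⊤) (x : K) (hx : ‖x‖ ≤ ‖ζ - 1‖) :
    ∃ i : ℕ, i < p ∧ ‖x - (i : K) * (ζ - 1)‖ ≤ ‖ζ - 1‖ ^ 2 := by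
  have hp3 : 3 ≤ p := by
    obtain ⟨m, hm⟩ := hodd
    have := hp.out.two_le
    omega
  have htp : ‖ζ - 1‖ ^ (p - 1) = (p : ℝ)⁻¹ := aux_t_pow hnorm hu hζ
  set t : ℝ := ‖ζ - 1‖ with htdef
  have h0 : 0 < t := aux_t_pos (norm_nonneg _) htp
  have h1 : t < 1 := aux_t_lt_one (norm_nonneg _) htp
  have hq1 : (1 : ℝ) < (p : ℝ) := by exact_mod_cast hp.out.one_lt
  set π : K := ζ - 1 with hπdef
  have hπ1 : π + 1 = ζ := by rw [hπdef]; ring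
  have hπt : ‖π‖ = t := rfl
  have hxadj : x ∈ Algebra.adjoin ℚ_[p] ({ζ} : Set K) := hgen ▸ Algebra.mem_top
  rw [Algebra.adjoin_singleton_eq_range_aeval] at hxadj
  obtain ⟨f, hf⟩ := hxadj
  have hf' : aeval ζ f = x := hf
  set g : Polynomial ℚ_[p] := ∑ i ∈ range p, (X + C 1) ^ i with hgdef
  have hgm : g.Monic :=
    (monic_X_add_C (1 : ℚ_[p])).geom_sum (by rw [natDegree_X_add_C]; exact one_pos)
      hp.out.ne_zero
  have hgdeg : g.degree ≤ ((p - 1 : ℕ) : WithBot ℕ) := by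
    refine le_trans (degree_sum_le _ _) (Finset.sup_le fun i hi => ?_)
    refine le_trans (degree_pow_le _ _) ?_
    rw [degree_X_add_C]
    rw [mem_range] at hi
    have h : (i : WithBot ℕ) ≤ ((p - 1 : ℕ) : WithBot ℕ) := by
      exact_mod_cast (by omega : i ≤ p - 1)
    simpa using h
  have hg0 : aeval π g = 0 := by
    rw [hgdef, map_sum]
    have h : ∀ i ∈ range p, aeval π ((X + C (1:ℚ_[p])) ^ i) = ζ ^ i := by
      intro i _
      rw [map_pow, map_add, aeval_X, aeval_C, map_one, hπ1]
    rw [Finset.sum_congr rfl h]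
    exact hζ.geom_sum_eq_zero hp.out.one_lt
  set F : Polynomial ℚ_[p] := f.comp (X + C 1) with hFdef
  set r : Polynomial ℚ_[p] := F %ₘ g with hrdef
  have hr : aeval π r = x := by
    have hdiv := modByMonic_add_div F g
    have h2 : aeval π (F %ₘ g + g * (F /ₘ g)) = aeval π F := by rw [hdiv]
    rw [map_add, map_mul, hg0, zero_mul, add_zero] at h2
    rw [hrdef, h2, hFdef, aeval_comp, map_add, aeval_X, aeval_C, map_one, hπ1, hf']
  have hdeg : r.natDegree < p - 1 := by
    rcases eq_or_ne r 0 with hr0 | hr0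
    · rw [hr0, natDegree_zero]; omega
    · rw [natDegree_lt_iff_degree_lt hr0]
      exact lt_of_lt_of_le (degree_modByMonic_lt F hgm) hgdeg
  have hxb : x = ∑ j ∈ range (p - 1), algebraMap ℚ_[p] K (r.coeff j) * π ^ j := by
    rw [← hr, aeval_eq_sum_range' hdeg]
    exact Finset.sum_congr rfl fun j _ => Algebra.smul_def _ _
  have hterm : ∀ j : ℕ, ‖algebraMap ℚ_[p] K (r.coeff j) * π ^ j‖ = ‖r.coeff j‖ * t ^ j := by
    intro j; rw [norm_mul, norm_pow, hnorm, hπt]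
  have hfne : ∀ j : ℕ, algebraMap ℚ_[p] K (r.coeff j) * π ^ j ≠ 0 ↔ r.coeff j ≠ 0 := by
    intro j
    have hπne : π ≠ 0 := by
      intro h; rw [h, norm_zero] at hπt; exact h0.ne (hπt ▸ rfl)
    rw [mul_ne_zero_iff]
    constructor
    · intro h; exact fun hc => h.1 (by rw [hc, map_zero])
    · intro h
      exact ⟨fun hc => h ((_root_.map_eq_zero (algebraMap ℚ_[p] K)).mp hc), pow_ne_zero _ hπne⟩
  have hvle : ∀ j, j < p - 1 → ‖r.coeff j‖ * t ^ j ≤ t := by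
    intro j hj
    have hdist : ∀ a ∈ range (p-1), ∀ a' ∈ range (p-1),
        algebraMap ℚ_[p] K (r.coeff a) * π ^ a ≠ 0 →
        algebraMap ℚ_[p] K (r.coeff a') * π ^ a' ≠ 0 →
        ‖algebraMap ℚ_[p] K (r.coeff a) * π ^ a‖ = ‖algebraMap ℚ_[p] K (r.coeff a') * π ^ a'‖ →
        a = a' := by
      intro a ha a' ha' hna hna' heq
      rw [hterm, hterm] at heq
      rw [hfne] at hna hna'
      rw [mem_range] at ha ha'
      rcases lt_trichotomy a a' with h | h | h
      · exact absurd heq (aux_distinct h0 htp hna hna' ha' h)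
      · exact h
      · exact absurd heq.symm (aux_distinct h0 htp hna' hna ha h)
    have := aux_each_le hu hdist j (mem_range.mpr hj)
    rw [hterm, ← hxb] at this
    exact le_trans this hx
  have hble : ∀ j, j < p - 1 → ‖r.coeff j‖ ≤ 1 := fun j hj =>
    aux_coeff_small h0 h1 htp hj (hvle j hj)
  have hb0 : ‖r.coeff 0‖ ≤ (p:ℝ)⁻¹ := by
    apply aux_padic_norm_lt_one
    have := hvle 0 (by omega)
    rw [pow_zero, mul_one] at this
    exact lt_of_le_of_lt this h1
  set a : ℚ_[p] := r.coeff 1 with hadef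
  have ha1 : ‖a‖ ≤ 1 := hble 1 (by omega)
  set az : ℤ_[p] := ⟨a, ha1⟩ with hazdef
  set i : ℕ := az.appr 1 with hidef
  have hilt : i < p := by have := az.appr_lt 1; simpa using this
  have hia : ‖a - (i:ℚ_[p])‖ ≤ (p:ℝ)⁻¹ := by
    have hspec := PadicInt.appr_spec 1 az
    have hle := (PadicInt.norm_le_pow_iff_mem_span_pow (az - (az.appr 1 : ℤ_[p])) 1).mpr hspec
    have hcoe : ((az - (az.appr 1 : ℤ_[p]) : ℤ_[p]) : ℚ_[p]) = a - (i:ℚ_[p]) := by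
      push_cast [hazdef, hidef]
      exact (PadicInt.coe_sub _ _).trans (by rw [PadicInt.coe_natCast])
    rw [PadicInt.norm_def, hcoe] at hle
    simpa using hle
  have hp1t : (p:ℝ)⁻¹ ≤ t := by
    have h := (aux_pow_le_pow_iff_of_lt_one (m := p - 1) (n := 1) h0 h1).mpr (by omega)
    rw [htp, pow_one] at h
    exact h
  have hp2t : (p:ℝ)⁻¹ ≤ t ^ 2 := by
    rw [← htp]
    exact (aux_pow_le_pow_iff_of_lt_one (m := p - 1) (n := 2) h0 h1).mpr (by omega)
  refine ⟨i, hilt, ?_⟩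
  have h1mem : (1:ℕ) ∈ range (p - 1) := mem_range.mpr (by omega)
  rw [hxb, ← Finset.add_sum_erase _ _ h1mem]
  have hrw : algebraMap ℚ_[p] K (r.coeff 1) * π ^ 1 +
      (∑ j ∈ (range (p-1)).erase 1, algebraMap ℚ_[p] K (r.coeff j) * π ^ j) - (i : K) * π =
      algebraMap ℚ_[p] K (a - (i:ℚ_[p])) * π +
      ∑ j ∈ (range (p-1)).erase 1, algebraMap ℚ_[p] K (r.coeff j) * π ^ j := by
    rw [map_sub, map_natCast, hadef]
    ring
  rw [hrw]
  have hA : ‖algebraMap ℚ_[p] K (a - (i:ℚ_[p])) * π‖ ≤ t ^ 2 := by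
    rw [norm_mul, hnorm, hπt]
    calc ‖a - (i:ℚ_[p])‖ * t ≤ (p:ℝ)⁻¹ * t :=
          mul_le_mul_of_nonneg_right hia h0.le
      _ ≤ t * t := mul_le_mul_of_nonneg_right hp1t h0.le
      _ = t ^ 2 := (sq t).symm
  have hR : ‖∑ j ∈ (range (p-1)).erase 1, algebraMap ℚ_[p] K (r.coeff j) * π ^ j‖ ≤ t ^ 2 := by
    apply norm_sum_le_of_forall_le_of_nonneg (by positivity)
    intro j hj
    have hj1 : j ≠ 1 := Finset.ne_of_mem_erase hj
    have hjlt : j < p - 1 := mem_range.mp (Finset.mem_of_mem_erase hj)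
    rw [hterm]
    rcases Nat.eq_zero_or_pos j with hj0 | hjpos
    · subst hj0
      rw [pow_zero, mul_one]
      exact le_trans hb0 hp2t
    · have hj2 : 2 ≤ j := by omega
      calc ‖r.coeff j‖ * t ^ j ≤ 1 * t ^ j :=
            mul_le_mul_of_nonneg_right (hble j hjlt) (pow_nonneg h0.le j)
        _ = t ^ j := one_mul _
        _ ≤ t ^ 2 := (aux_pow_le_pow_iff_of_lt_one h0 h1).mpr hj2
  calc ‖algebraMap ℚ_[p] K (a - (i:ℚ_[p])) * π +
      ∑ j ∈ (range (p-1)).erase 1, algebraMap ℚ_[p] K (r.coeff j) * π ^ j‖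
      ≤ max ‖algebraMap ℚ_[p] K (a - (i:ℚ_[p])) * π‖
        ‖∑ j ∈ (range (p-1)).erase 1, algebraMap ℚ_[p] K (r.coeff j) * π ^ j‖ :=
        norm_add_le_max _ _
    _ ≤ t ^ 2 := max_le hA hR

end PrincipalUnitsAux

/-- Let `p` be an odd prime, `ζ_p` a primitive `p`-th root of unity,
`k = ℚ_p(ζ_p)`, and `U^(n) = 1 + m_k^n` (where `m_k^n = {x : ‖x‖ ≤ p^(-n/(p-1))}`).  Then
`ζ_p ∈ U^(1) \ U^(2)`, the cyclic group `⟨ζ_p⟩` intersects `U^(2)` trivially, and `U^(1)` is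
the internal direct product `⟨ζ_p⟩ × U^(2)`: every `u ∈ U^(1)` is uniquely `ζ_p^i · w` with
`i ∈ ℤ/p` and `w ∈ U^(2)`. -/
theorem principal_units_internal_direct_product
    (p : ℕ) [Fact p.Prime] (hodd : Odd p) (K : Type*) [NormedField K] [CompleteSpace K]
    [Algebra ℚ_[p] K] (hnorm : ∀ x : ℚ_[p], ‖algebraMap ℚ_[p] K x‖ = ‖x‖)
    (ζ : Kˣ) (hζ : IsPrimitiveRoot (ζ : K) p)
    (hgen : Algebra.adjoin ℚ_[p] ({(ζ : K)} : Set K) = ⊤)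
    (U₁ U₂ : Subgroup Kˣ)
    (hU₁ : ∀ u : Kˣ, u ∈ U₁ ↔ ‖(u : K) - 1‖ ≤ (p : ℝ) ^ (-(1 / ((p : ℝ) - 1))))
    (hU₂ : ∀ u : Kˣ, u ∈ U₂ ↔ ‖(u : K) - 1‖ ≤ (p : ℝ) ^ (-(2 / ((p : ℝ) - 1)))) :
    (ζ ∈ U₁ ∧ ζ ∉ U₂) ∧
    (Subgroup.zpowers ζ ⊓ U₂ = ⊥) ∧
    (∀ u : Kˣ, u ∈ U₁ →
      ∃! iw : ZMod p × Kˣ, iw.2 ∈ U₂ ∧ u = ζ ^ (iw.1.val) * iw.2) := by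
  have hu : IsUltrametricDist K := aux_ultra hnorm
  have hppos : 0 < p := (Fact.out : p.Prime).pos
  have hq0 : (0:ℝ) < (p:ℝ) := by exact_mod_cast hppos
  have htp : ‖(ζ : K) - 1‖ ^ (p - 1) = (p : ℝ)⁻¹ := aux_t_pow hnorm hu hζ
  set t : ℝ := ‖(ζ : K) - 1‖ with htdef
  have h0 : 0 < t := aux_t_pos (norm_nonneg _) htp
  have h1 : t < 1 := aux_t_lt_one (norm_nonneg _) htp
  have htr : t = (p : ℝ) ^ (-(1 / ((p : ℝ) - 1))) := aux_t_rpow (norm_nonneg _) htp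
  have ht2 : (p : ℝ) ^ (-(2 / ((p : ℝ) - 1))) = t ^ 2 := by
    rw [htr, ← Real.rpow_natCast ((p:ℝ) ^ (-(1 / ((p : ℝ) - 1)))) 2, ← Real.rpow_mul hq0.le]
    congr 1
    push_cast
    ring
  have mem1 : ∀ u : Kˣ, u ∈ U₁ ↔ ‖(u : K) - 1‖ ≤ t := fun u => by rw [hU₁ u, htr]
  have mem2 : ∀ u : Kˣ, u ∈ U₂ ↔ ‖(u : K) - 1‖ ≤ t ^ 2 := fun u => by rw [hU₂ u, ht2]
  have ht21 : t ^ 2 < t := by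
    calc t ^ 2 < t ^ 1 := pow_lt_pow_right_of_lt_one₀ h0 h1 one_lt_two
      _ = t := pow_one t
  have hnζ : ‖(ζ : K)‖ = 1 := aux_norm_zeta hζ
  have hζu : IsPrimitiveRoot ζ p := IsPrimitiveRoot.coe_units_iff.mp hζ
  have horder : orderOf ζ = p := hζu.eq_orderOf.symm
  have hζp1 : ζ ^ p = 1 := hζu.pow_eq_one
  have key : ∀ n : ℕ, n < p → ζ ^ n ∈ U₂ → n = 0 := by
    intro n hn hmem
    by_contra hne
    have hnd : ¬ p ∣ n := by
      intro hdvd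
      exact hne (Nat.eq_zero_of_dvd_of_lt hdvd hn)
    have heqt : ‖(ζ : K) ^ n - 1‖ = t := aux_norm_pow_sub_one hu hζ hnd
    rw [mem2] at hmem
    rw [Units.val_pow_eq_pow_val] at hmem
    rw [heqt] at hmem
    linarith
  have hinf : Subgroup.zpowers ζ ⊓ U₂ = ⊥ := by
    rw [eq_bot_iff]
    intro g hg
    rw [Subgroup.mem_inf] at hg
    obtain ⟨⟨m, hm⟩, hg2⟩ := hg
    have hm' : ζ ^ m = g := hm
    rw [Subgroup.mem_bot]
    set n : ℕ := (m % (p:ℤ)).toNat with hndef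
    have hmodlt : m % (p:ℤ) < p := Int.emod_lt_of_pos m (by exact_mod_cast hppos)
    have hmodnn : 0 ≤ m % (p:ℤ) := Int.emod_nonneg m (by exact_mod_cast hppos.ne')
    have hnlt : n < p := by omega
    have hzm : ζ ^ m = ζ ^ (n:ℕ) := by
      conv_lhs => rw [← Int.emod_add_mul_ediv m (p:ℤ)]
      rw [zpow_add, zpow_mul, zpow_natCast, hζp1, one_zpow, mul_one, ← zpow_natCast]
      congr 1
      omega
    have hgn : g = ζ ^ (n:ℕ) := by rw [← hm', hzm]
    have := key n hnlt (hgn ▸ hg2)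
    rw [hgn, this, pow_zero]
  refine ⟨⟨(mem1 ζ).mpr le_rfl, ?_⟩, hinf, ?_⟩
  · intro hmem
    have := (mem2 ζ).mp hmem
    linarith
  · intro u hu1
    have hx : ‖(u : K) - 1‖ ≤ t := (mem1 u).mp hu1
    obtain ⟨i, hip, hib⟩ := aux_digit hnorm hu hζ hodd hgen ((u : K) - 1) hx
    set w : Kˣ := ζ⁻¹ ^ i * u with hwdef
    have hwu : u = ζ ^ i * w := by rw [hwdef]; group
    have hζne : ((ζ : Kˣ) : K) ≠ 0 := Units.ne_zero ζ
    have hone : ((ζ : K))⁻¹ ^ i * ((ζ : K)) ^ i = 1 := by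
      rw [← mul_pow, inv_mul_cancel₀ hζne, one_pow]
    have hwK : (w : K) - 1 = ((ζ : K))⁻¹ ^ i * ((u : K) - (ζ : K) ^ i) := by
      have hwv : (w : K) = ((ζ : K))⁻¹ ^ i * (u : K) := by
        rw [hwdef, Units.val_mul, Units.val_pow_eq_pow_val, Units.val_inv_eq_inv_val]
      rw [hwv, mul_sub, hone]
    have hnormw : ‖(w : K) - 1‖ ≤ t ^ 2 := by
      rw [hwK, norm_mul, norm_pow, norm_inv, hnζ, inv_one, one_pow, one_mul]
      have hsplit : (u : K) - (ζ : K) ^ i =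
          ((u : K) - 1 - (i : K) * ((ζ : K) - 1)) -
          ((ζ : K) ^ i - 1 - (i : K) * ((ζ : K) - 1)) := by ring
      rw [hsplit, sub_eq_add_neg]
      calc ‖((u : K) - 1 - (i : K) * ((ζ : K) - 1)) +
          -(((ζ : K) ^ i - 1 - (i : K) * ((ζ : K) - 1)))‖
          ≤ max ‖(u : K) - 1 - (i : K) * ((ζ : K) - 1)‖
            ‖-(((ζ : K) ^ i - 1 - (i : K) * ((ζ : K) - 1)))‖ := norm_add_le_max _ _
        _ ≤ t ^ 2 := by
            apply max_le hib
            rw [norm_neg]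
            exact aux_pow_expand hu hnζ i
    have hw2 : w ∈ U₂ := (mem2 w).mpr hnormw
    refine ⟨((i : ZMod p), w), ⟨hw2, ?_⟩, ?_⟩
    · show u = ζ ^ ((i : ZMod p)).val * w
      rw [ZMod.val_cast_of_lt hip]
      exact hwu
    · rintro ⟨i', w'⟩ ⟨hw2', heq'⟩
      simp only at heq' hw2' ⊢
      -- both decompositions
      have hab : ζ ^ i'.val * w' = ζ ^ ((i : ZMod p)).val * w := by
        rw [← heq']
        rw [ZMod.val_cast_of_lt hip]
        exact hwu
      set b : ℕ := ((i : ZMod p)).val with hbdef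
      have hwexp : w = (ζ ^ b)⁻¹ * (ζ ^ i'.val * w') := by rw [hab]; group
      have hwdiv : w * w'⁻¹ = ζ ^ ((i'.val : ℤ) - (b : ℤ)) := by
        rw [hwexp, zpow_sub, zpow_natCast, zpow_natCast]
        group
      have hdmem : w * w'⁻¹ ∈ Subgroup.zpowers ζ ⊓ U₂ := by
        rw [Subgroup.mem_inf]
        exact ⟨⟨(i'.val : ℤ) - (b : ℤ), hwdiv.symm⟩, mul_mem hw2 (inv_mem hw2')⟩
      rw [hinf, Subgroup.mem_bot] at hdmem
      have hww' : w = w' := by rwa [mul_inv_eq_one] at hdmem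
      have hzz : ζ ^ i'.val = ζ ^ b := by
        rw [hww'] at hab
        exact mul_right_cancel hab
      have hvals : i'.val = b := by
        refine pow_injOn_Iio_orderOf (x := ζ) ?_ ?_ hzz
        · rw [Set.mem_Iio, horder]; exact ZMod.val_lt i'
        · rw [Set.mem_Iio, horder, hbdef]; exact ZMod.val_lt _
      have hi' : i' = (i : ZMod p) := by
        have := congrArg (Nat.cast : ℕ → ZMod p) hvals
        rwa [ZMod.natCast_val, ZMod.cast_id, hbdef, ZMod.natCast_val, ZMod.cast_id] at this
      exact Prod.ext hi' hww'.symm
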